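/- If Q = pyr Q' is a pyramid over a polytope Q', then the twisted prism tprism Q is combinatorially equivalent to the bipyramid over the twisted prism over Q', i.e. tprism(pyr Q') ≅ bip(tprism Q'). -/
import Mathlib

open Set

noncomputable section

/-- `P` is a polytope: the convex hull of finitely many points. -/
def IsPolytope {n : ℕ} (P : Set (Fin n → ℝ)) : Prop :=
  ∃ S : Finset (Fin n → ℝ), P = convexHull ℝ (S : Set (Fin n → ℝ))

/-- The dimension of a set: the rank of the direction of its affine hull. -/
def sdim {n : ℕ} (P : Set (Fin n → ℝ)) : ℕ :=
  Module.finrank ℝ (vectorSpan ℝ P)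

/-- `F` is an `i`-dimensional nonempty (exposed) face of `P`. -/
def isFaceOf {n : ℕ} (P F : Set (Fin n → ℝ)) (i : ℕ) : Prop :=
  IsExposed ℝ P F ∧ F.Nonempty ∧ sdim F = i

/-- `f_i(P)`, the number of `i`-dimensional faces of `P`. -/
def fVec {n : ℕ} (P : Set (Fin n → ℝ)) (i : ℕ) : ℕ :=
  Nat.card {F : Set (Fin n → ℝ) // isFaceOf P F i}

/-- the flag number `f_{ij}(P)`: the number of pairs of an `i`-face contained in a `j`-face. -/
def flagNum {n : ℕ} (P : Set (Fin n → ℝ)) (i j : ℕ) : ℕ :=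
  Nat.card {F : Set (Fin n → ℝ) × Set (Fin n → ℝ) //
    isFaceOf P F.1 i ∧ isFaceOf P F.2 j ∧ F.1 ⊆ F.2}

/-- `s(P) = 1 + Σ_{i<d} f_i(P)`, the number of nonempty faces of a `d`-polytope. -/
def sNum {n : ℕ} (P : Set (Fin n → ℝ)) (d : ℕ) : ℕ :=
  1 + ∑ i ∈ Finset.range d, fVec P i

/-- `P` is centrally symmetric. -/
def IsCS {n : ℕ} (P : Set (Fin n → ℝ)) : Prop := P = -P


/-- embedding of `ℝ^n` into `ℝ^{n+1}` with last coordinate `0`. -/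
def emb {n : ℕ} (x : Fin n → ℝ) : Fin (n + 1) → ℝ := Fin.snoc x 0

/-- the bipyramid over `Q ⊆ ℝ^n`, with apexes `(0,…,0,±1)`. -/
def bip {n : ℕ} (Q : Set (Fin n → ℝ)) : Set (Fin (n + 1) → ℝ) :=
  convexHull ℝ (emb '' Q ∪ {Fin.snoc (0 : Fin n → ℝ) (1 : ℝ), Fin.snoc (0 : Fin n → ℝ) (-1 : ℝ)})

/-- the `f`-polynomial of a `d`-polytope `P`:
`f_P(t) = t^d + Σ_{i=0}^{d-1} f_i(P) t^{d-1-i}`. -/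
def fPoly {n : ℕ} (P : Set (Fin n → ℝ)) (d : ℕ) : Polynomial ℝ :=
  Polynomial.X ^ d + ∑ i ∈ Finset.range d, (fVec P i : ℝ) • Polynomial.X ^ (d - 1 - i)

/-- the twisted prism over `Q ⊆ ℝ^n`: `conv((Q × {1}) ∪ (-Q × {-1})) ⊆ ℝ^{n+1}`. -/
def tprism {n : ℕ} (Q : Set (Fin n → ℝ)) : Set (Fin (n + 1) → ℝ) :=
  convexHull ℝ ((fun x => Fin.snoc x (1 : ℝ)) '' Q ∪ (fun x => Fin.snoc x (-1 : ℝ)) '' (-Q))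

/-- two polytopes are combinatorially equivalent if their face lattices
(nonempty exposed faces ordered by inclusion) are isomorphic. -/
def CombEquiv {m n : ℕ} (P : Set (Fin m → ℝ)) (Q : Set (Fin n → ℝ)) : Prop :=
  Nonempty ({F : Set (Fin m → ℝ) // IsExposed ℝ P F ∧ F.Nonempty} ≃o
            {F : Set (Fin n → ℝ) // IsExposed ℝ Q F ∧ F.Nonempty})

/-- the pyramid over `Q ⊆ ℝ^n`, with apex `(0,…,0,1)` (outside `aff(Q × {0})`). -/
def pyr {n : ℕ} (Q : Set (Fin n → ℝ)) : Set (Fin (n + 1) → ℝ) :=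
  convexHull ℝ ((fun x => Fin.snoc x (0 : ℝ)) '' Q ∪ {Fin.snoc (0 : Fin n → ℝ) (1 : ℝ)})


/-- linear embedding `x ↦ (x,0)`. -/
def embL (n : ℕ) : (Fin n → ℝ) →ₗ[ℝ] (Fin (n+1) → ℝ) where
  toFun x := Fin.snoc x 0
  map_add' x y := by
    funext i
    refine Fin.lastCases ?_ (fun j => ?_) i <;> simp
  map_smul' c x := by
    funext i
    refine Fin.lastCases ?_ (fun j => ?_) i <;> simp

/-- affine map `x ↦ (x,c)`. -/
def sncA (n : ℕ) (c : ℝ) : (Fin n → ℝ) →ᵃ[ℝ] (Fin (n+1) → ℝ) where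
  toFun x := Fin.snoc x c
  linear := embL n
  map_vadd' p v := by
    funext i
    refine Fin.lastCases ?_ (fun j => ?_) i <;> simp [embL]

@[simp] lemma sncA_apply (n : ℕ) (c : ℝ) (x : Fin n → ℝ) : sncA n c x = Fin.snoc x c := rfl

lemma snoc_image_convexHull (n : ℕ) (c : ℝ) (s : Set (Fin n → ℝ)) :
    (fun x => (Fin.snoc x c : Fin (n+1) → ℝ)) '' (convexHull ℝ s)
      = convexHull ℝ ((fun x => (Fin.snoc x c : Fin (n+1) → ℝ)) '' s) :=
  (sncA n c).image_convexHull s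

lemma neg_snoc (n : ℕ) (x : Fin n → ℝ) (c : ℝ) :
    -(Fin.snoc x c : Fin (n+1) → ℝ) = Fin.snoc (-x) (-c) := by
  funext i
  refine Fin.lastCases ?_ (fun j => ?_) i <;> simp

/-- the twisting map on the last two coordinates: `(x,b,c) ↦ (x,c-b,b)`. -/
def Tfun (n : ℕ) (x : Fin (n+2) → ℝ) : Fin (n+2) → ℝ :=
  Fin.snoc (Fin.snoc (Fin.init (Fin.init x))
    (x (Fin.last (n+1)) - x (Fin.castSucc (Fin.last n)))) (x (Fin.castSucc (Fin.last n)))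

def Tinv (n : ℕ) (x : Fin (n+2) → ℝ) : Fin (n+2) → ℝ :=
  Fin.snoc (Fin.snoc (Fin.init (Fin.init x)) (x (Fin.last (n+1))))
    (x (Fin.castSucc (Fin.last n)) + x (Fin.last (n+1)))

lemma Tfun_snoc (n : ℕ) (x : Fin n → ℝ) (b c : ℝ) :
    Tfun n (Fin.snoc (Fin.snoc x b) c) = Fin.snoc (Fin.snoc x (c - b)) b := by
  simp [Tfun, Fin.init_snoc]

lemma Tinv_snoc (n : ℕ) (x : Fin n → ℝ) (b c : ℝ) :
    Tinv n (Fin.snoc (Fin.snoc x b) c) = Fin.snoc (Fin.snoc x c) (b + c) := by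
  simp [Tinv, Fin.init_snoc]

lemma snoc_decomp (n : ℕ) (x : Fin (n+2) → ℝ) :
    x = Fin.snoc (Fin.snoc (Fin.init (Fin.init x)) (x (Fin.castSucc (Fin.last n))))
        (x (Fin.last (n+1))) := by
  have h1 : Fin.snoc (Fin.init (Fin.init x)) (x (Fin.castSucc (Fin.last n))) = Fin.init x := by
    have : x (Fin.castSucc (Fin.last n)) = Fin.init x (Fin.last n) := rfl
    rw [this, Fin.snoc_init_self]
  rw [h1, Fin.snoc_init_self]

/-- the twisting linear equivalence. -/
def Teq (n : ℕ) : (Fin (n+2) → ℝ) ≃ₗ[ℝ] (Fin (n+2) → ℝ) where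
  toFun := Tfun n
  invFun := Tinv n
  map_add' x y := by
    funext i
    refine Fin.lastCases ?_ (fun j => ?_) i
    · simp [Tfun]
    · refine Fin.lastCases ?_ (fun k => ?_) j <;> simp [Tfun, Fin.init] <;> ring
  map_smul' c x := by
    funext i
    refine Fin.lastCases ?_ (fun j => ?_) i
    · simp [Tfun]
    · refine Fin.lastCases ?_ (fun k => ?_) j <;> simp [Tfun, Fin.init] <;> ring
  left_inv x := by
    show Tinv n (Tfun n x) = x
    conv_lhs => rw [snoc_decomp n x, Tfun_snoc, Tinv_snoc]
    conv_rhs => rw [snoc_decomp n x]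
    ring_nf
  right_inv x := by
    show Tfun n (Tinv n x) = x
    conv_lhs => rw [snoc_decomp n x, Tinv_snoc, Tfun_snoc]
    conv_rhs => rw [snoc_decomp n x]
    ring_nf

section transfer
variable {m k : ℕ}

lemma isExposed_image (e : (Fin m → ℝ) ≃ₗ[ℝ] (Fin k → ℝ)) {P F : Set (Fin m → ℝ)}
    (hF : IsExposed ℝ P F) : IsExposed ℝ (⇑e '' P) (⇑e '' F) := by
  intro hne
  obtain ⟨x, hx⟩ := hne
  obtain ⟨l, hl⟩ := hF ⟨e.symm x, by rcases hx with ⟨y, hy, rfl⟩; simpa using hy⟩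
  refine ⟨l.comp (LinearMap.toContinuousLinearMap e.symm.toLinearMap), ?_⟩
  ext z
  simp only [Set.mem_image, Set.mem_setOf_eq, ContinuousLinearMap.comp_apply,
    LinearMap.coe_toContinuousLinearMap', LinearEquiv.coe_coe]
  constructor
  · rintro ⟨y, hy, rfl⟩
    rw [hl] at hy
    obtain ⟨hyP, hmax⟩ := hy
    refine ⟨⟨y, hyP, rfl⟩, ?_⟩
    rintro w ⟨u, hu, rfl⟩
    simpa using hmax u hu
  · rintro ⟨⟨y, hyP, rfl⟩, hmax⟩
    refine ⟨y, ?_, rfl⟩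
    rw [hl]
    refine ⟨hyP, fun u hu => ?_⟩
    simpa using hmax (e u) ⟨u, hu, rfl⟩

lemma combEquiv_of_linearEquiv (e : (Fin m → ℝ) ≃ₗ[ℝ] (Fin k → ℝ))
    (P : Set (Fin m → ℝ)) (Q : Set (Fin k → ℝ)) (h : ⇑e '' P = Q) :
    Nonempty ({F : Set (Fin m → ℝ) // IsExposed ℝ P F ∧ F.Nonempty} ≃o
              {F : Set (Fin k → ℝ) // IsExposed ℝ Q F ∧ F.Nonempty}) := by
  subst h
  refine ⟨{
    toFun := fun F => ⟨⇑e '' F.1, isExposed_image e F.2.1, F.2.2.image _⟩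
    invFun := fun G => ⟨⇑e.symm '' G.1, by
        have := isExposed_image e.symm G.2.1
        rwa [Set.image_image, show (fun x => e.symm (e x)) = id from funext fun x => e.symm_apply_apply x, Set.image_id] at this,
      G.2.2.image _⟩
    left_inv := fun F => Subtype.ext (e.toEquiv.symm_image_image F.1)
    right_inv := fun G => Subtype.ext (e.toEquiv.image_symm_image G.1)
    map_rel_iff' := fun {F G} =>
      Set.image_subset_image_iff e.injective }⟩
end transfer

@[simp] lemma snoc_zero_zero (n : ℕ) : (Fin.snoc (0 : Fin n → ℝ) (0:ℝ)) = (0 : Fin (n+1) → ℝ) := by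
  funext i
  refine Fin.lastCases ?_ (fun j => ?_) i <;> simp

lemma neg_image_snoc (n : ℕ) (c : ℝ) (s : Set (Fin n → ℝ)) :
    -((fun x => (Fin.snoc x c : Fin (n+1) → ℝ)) '' s)
      = (fun x => (Fin.snoc x (-c) : Fin (n+1) → ℝ)) '' (-s) := by
  rw [← Set.image_neg_eq_neg, ← Set.image_neg_eq_neg, Set.image_image, Set.image_image]
  apply Set.image_congr'
  intro x
  rw [neg_snoc]

lemma key {n : ℕ} (Q' : Set (Fin n → ℝ)) :
    ⇑(Teq n) '' tprism (pyr Q') = bip (tprism Q') := by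
  have hembL : ∀ (m : ℕ) (s : Set (Fin m → ℝ)),
      emb '' convexHull ℝ s = convexHull ℝ (emb '' s) := by
    intro m s
    have : (emb : (Fin m → ℝ) → _) = fun x => (Fin.snoc x (0:ℝ) : Fin (m+1) → ℝ) := rfl
    rw [this]
    exact snoc_image_convexHull m 0 s
  -- RHS
  conv_rhs => rw [bip, tprism, hembL, convexHull_convexHull_union_left]
  -- LHS
  rw [tprism, pyr, ← convexHull_neg, snoc_image_convexHull, snoc_image_convexHull,
    convexHull_convexHull_union_left, convexHull_convexHull_union_right]
  rw [show ⇑(Teq n) = ⇑((Teq n : (Fin (n+2) → ℝ) →ₗ[ℝ] (Fin (n+2) → ℝ))) from rfl,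
    LinearMap.image_convexHull]
  congr 1
  -- normalize generator sets
  simp only [Set.union_neg, neg_image_snoc, Set.neg_singleton, neg_snoc, neg_zero,
    Set.image_union, Set.image_singleton, Set.image_image]
  simp only [LinearEquiv.coe_coe]
  have hT : ∀ (x : Fin n → ℝ) (b c : ℝ),
      Teq n (Fin.snoc (Fin.snoc x b) c) = Fin.snoc (Fin.snoc x (c - b)) b :=
    fun x b c => Tfun_snoc n x b c
  simp only [hT, sub_zero, sub_self, neg_sub_neg, snoc_zero_zero]
  ext z
  simp only [Set.mem_union, Set.mem_insert_iff, Set.mem_singleton_iff]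
  tauto


/-- The twisted prism over a pyramid is combinatorially equivalent to the bipyramid
over the twisted prism over the base: `tprism(pyr Q') ≅ bip(tprism Q')`. -/
theorem tprism_pyr_combEquiv_bip_tprism {n : ℕ} (Q' : Set (Fin n → ℝ))
    (hQ : IsPolytope Q') (hd : sdim Q' = n) :
    CombEquiv (tprism (pyr Q')) (bip (tprism Q')) := by
  exact combEquiv_of_linearEquiv (Teq n) _ _ (key Q')
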